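/- Let l, k ≥ 0 and n, d_k, d_l ≥ 1. The complex vector space of matrices f : ((Fin l → Fin n) × Fin d_l) × ((Fin k → Fin n) × Fin d_k) → ℂ satisfying f((σ ∘ I, i), (σ ∘ J, j)) = f((I, i), (J, j)) for all σ ∈ S_n has dimension d_k · d_l · Bell(l+k, n); a basis is given by the matrices X_{π,i,j} indexed by set partitions π of Fin(l+k) with at most n blocks and by i ∈ Fin d_l, j ∈ Fin d_k, where X_{π,i,j}((I, i'), (J, j')) = 1 if i' = i, j' = j and the kernel partition of the concatenated tuple (I, J) equals π, and 0 otherwise. -/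

import Mathlib

/-! Two tuples `Fin m → Fin n` lie in the same `S_n`-orbit iff they have the same kernel
partition, and the kernels that occur are exactly the partitions with at most `n` blocks. So an
invariant matrix is the same thing as a function of the label `(ker (I, J), i, j)`: pulling back
along this surjective labelling is a linear isomorphism from all functions on labels onto the
invariant matrices, and it carries the standard basis to the matrices `X_{π,i,j}`. -/

noncomputable section
open scoped Classical

/-- `Bell m n`: the number of set partitions of `Fin m` (encoded as setoids,
i.e. equivalence relations) into at most `n` blocks. -/
def Bell (m n : ℕ) : ℕ :=
  Nat.card {π : Setoid (Fin m) // Nat.card (Quotient π) ≤ n}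

/-- The space `Hom_{S_n}(M_n^{⊗k} ⊗ ℂ^{d_k}, M_n^{⊗l} ⊗ ℂ^{d_l})` in the standard
basis: matrices `f : ((Fin l → Fin n) × Fin dl) × ((Fin k → Fin n) × Fin dk) → ℂ`
satisfying `f ((σ ∘ I, i), (σ ∘ J, j)) = f ((I, i), (J, j))` for all `σ ∈ S_n`. -/
def MHomFeat (n l k dl dk : ℕ) :
    Submodule ℂ (((Fin l → Fin n) × Fin dl) × ((Fin k → Fin n) × Fin dk) → ℂ) where
  carrier := {f | ∀ (σ : Equiv.Perm (Fin n)) (I : Fin l → Fin n) (i : Fin dl)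
    (J : Fin k → Fin n) (j : Fin dk),
    f ((⇑σ ∘ I, i), (⇑σ ∘ J, j)) = f ((I, i), (J, j))}
  add_mem' := by
    intro a b ha hb σ I i J j
    simp only [Pi.add_apply, ha σ I i J j, hb σ I i J j]
  zero_mem' := by intro σ I i J j; rfl
  smul_mem' := by
    intro c a ha σ I i J j
    simp only [Pi.smul_apply, ha σ I i J j]

theorem LinearMap.mem_range_funLeft_iff {R M X Y : Type*} [Semiring R] [AddCommMonoid M]
    [Module R M] {κ : X → Y} (hκ : Function.Surjective κ) {f : X → M} :
    f ∈ LinearMap.range (LinearMap.funLeft R M κ) ↔ ∀ p q, κ p = κ q → f p = f q := by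
  constructor
  · rintro ⟨g, rfl⟩ p q h
    simp only [LinearMap.funLeft_apply, h]
  · intro hf
    exact ⟨f ∘ Function.surjInv hκ,
      funext fun p => hf _ p (Function.surjInv_eq hκ (κ p))⟩

theorem Fin.comp_append {α β : Type*} {m k : ℕ} (g : α → β) (I : Fin m → α) (J : Fin k → α) :
    g ∘ Fin.append I J = Fin.append (g ∘ I) (g ∘ J) := by
  funext x
  induction x using Fin.addCases <;> simp

namespace Setoid

variable {α β γ : Type*}

instance finite [Finite α] : Finite (Setoid α) :=
  Finite.of_injective (fun r : Setoid α => (r : α → α → Prop)) fun _ _ h =>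
    Setoid.ext fun a b => iff_of_eq (congrFun (congrFun h a) b)

theorem ker_comp_of_injective {g : β → γ} (hg : Function.Injective g) (T : α → β) :
    ker (g ∘ T) = ker T :=
  Setoid.ext fun _ _ => by simp only [ker_def, Function.comp_apply, hg.eq_iff]

theorem card_quotient_ker_le [Finite β] (T : α → β) :
    Nat.card (Quotient (ker T)) ≤ Nat.card β :=
  Nat.card_le_card_of_injective _ (kerLift_injective T)

theorem exists_ker_eq [Finite α] [Finite β] {π : Setoid α}
    (h : Nat.card (Quotient π) ≤ Nat.card β) : ∃ T : α → β, ker T = π := by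
  have := Fintype.ofFinite (Quotient π)
  have := Fintype.ofFinite β
  obtain ⟨g⟩ := Function.Embedding.nonempty_of_card_le
    (by simpa only [Nat.card_eq_fintype_card] using h)
  exact ⟨g ∘ Quotient.mk'', by rw [ker_comp_of_injective g.injective, ker_mk_eq]⟩

theorem ker_eq_ker_iff_exists_perm [Finite α] {T T' : α → β} :
    ker T = ker T' ↔ ∃ σ : Equiv.Perm β, ⇑σ ∘ T = T' := by
  constructor
  · intro h
    have hT' : ∀ a b, ker T a b → T' a = T' b := fun a b hab => by rwa [h] at hab
    have hinj : Function.Injective (Quotient.lift T' hT') := by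
      rintro ⟨a⟩ ⟨b⟩ hab
      exact Quotient.sound (show ker T a b by rw [h]; exact hab)
    obtain ⟨σ, hσ⟩ :=
      Equiv.Perm.exists_extending_pair (kerLift T) _ (kerLift_injective T) hinj
    exact ⟨σ, funext fun a => hσ ⟦a⟧⟩
  · rintro ⟨σ, rfl⟩
    exact (ker_comp_of_injective σ.injective T).symm

end Setoid

theorem Fin.ker_append_eq_iff_exists_perm {β : Type*} {l k : ℕ} {I I' : Fin l → β}
    {J J' : Fin k → β} :
    Setoid.ker (Fin.append I J) = Setoid.ker (Fin.append I' J') ↔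
      ∃ σ : Equiv.Perm β, ⇑σ ∘ I = I' ∧ ⇑σ ∘ J = J' := by
  have append_inj : ∀ σ : Equiv.Perm β,
      Fin.append (σ ∘ I) (σ ∘ J) = Fin.append I' J' ↔ ⇑σ ∘ I = I' ∧ ⇑σ ∘ J = J' :=
    fun σ => ((Fin.appendEquiv l k).apply_eq_iff_eq
      (x := (σ ∘ I, σ ∘ J)) (y := (I', J'))).trans Prod.mk_inj
  simp_rw [Setoid.ker_eq_ker_iff_exists_perm, Fin.comp_append, append_inj]

abbrev PartitionAtMost (m n : ℕ) : Type :=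
  {π : Setoid (Fin m) // Nat.card (Quotient π) ≤ n}

namespace MHomFeat

variable {n l k dl dk : ℕ}

def orbitLabel (p : ((Fin l → Fin n) × Fin dl) × ((Fin k → Fin n) × Fin dk)) :
    PartitionAtMost (l + k) n × Fin dl × Fin dk :=
  (⟨Setoid.ker (Fin.append p.1.1 p.2.1),
    (Setoid.card_quotient_ker_le _).trans_eq (Nat.card_fin n)⟩, p.1.2, p.2.2)

theorem orbitLabel_surjective :
    Function.Surjective (orbitLabel : _ → PartitionAtMost (l + k) n × Fin dl × Fin dk) := by
  rintro ⟨⟨π, hπ⟩, i, j⟩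
  obtain ⟨T, hT⟩ := Setoid.exists_ker_eq (β := Fin n) (by rwa [Nat.card_fin])
  obtain ⟨⟨I, J⟩, rfl⟩ := (Fin.appendEquiv l k).surjective T
  exact ⟨((I, i), (J, j)), Prod.ext (Subtype.ext hT) rfl⟩

theorem mem_iff {f : ((Fin l → Fin n) × Fin dl) × ((Fin k → Fin n) × Fin dk) → ℂ} :
    f ∈ MHomFeat n l k dl dk ↔ ∀ p q, orbitLabel p = orbitLabel q → f p = f q := by
  constructor
  · rintro hf ⟨⟨I, i⟩, J, j⟩ ⟨⟨I', i'⟩, J', j'⟩ h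
    simp only [orbitLabel, Prod.mk.injEq, Subtype.mk.injEq] at h
    obtain ⟨hker, rfl, rfl⟩ := h
    obtain ⟨σ, rfl, rfl⟩ := Fin.ker_append_eq_iff_exists_perm.1 hker
    exact (hf σ I i J j).symm
  · intro hf σ I i J j
    have hker := (Fin.ker_append_eq_iff_exists_perm (I' := σ ∘ I) (J' := σ ∘ J)).2 ⟨σ, rfl, rfl⟩
    exact hf _ _ (Prod.ext (Subtype.ext hker.symm) rfl)

theorem eq_range_funLeft :
    MHomFeat n l k dl dk = LinearMap.range (LinearMap.funLeft ℂ ℂ orbitLabel) := by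
  ext f
  rw [mem_iff, LinearMap.mem_range_funLeft_iff orbitLabel_surjective]

variable (n l k dl dk) in
def pullbackEquiv :
    (PartitionAtMost (l + k) n × Fin dl × Fin dk → ℂ) ≃ₗ[ℂ] MHomFeat n l k dl dk :=
  (LinearEquiv.ofInjective _
      (LinearMap.funLeft_injective_of_surjective _ _ _ orbitLabel_surjective)).trans
    (LinearEquiv.ofEq _ _ eq_range_funLeft.symm)

theorem coe_pullbackEquiv_apply (g : PartitionAtMost (l + k) n × Fin dl × Fin dk → ℂ) :
    (pullbackEquiv n l k dl dk g : ((Fin l → Fin n) × Fin dl) × ((Fin k → Fin n) × Fin dk) → ℂ) =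
      g ∘ orbitLabel :=
  rfl

end MHomFeat

theorem MHomFeat_basis_general (l k n dl dk : ℕ) :
    Module.finrank ℂ ↥(MHomFeat n l k dl dk) = dk * dl * Bell (l + k) n ∧
    ∃ b : Module.Basis ({π : Setoid (Fin (l + k)) // Nat.card (Quotient π) ≤ n} × Fin dl × Fin dk)
        ℂ ↥(MHomFeat n l k dl dk),
      ∀ (x : {π : Setoid (Fin (l + k)) // Nat.card (Quotient π) ≤ n} × Fin dl × Fin dk)
        (I : Fin l → Fin n) (i' : Fin dl) (J : Fin k → Fin n) (j' : Fin dk),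
        (b x : ((Fin l → Fin n) × Fin dl) × ((Fin k → Fin n) × Fin dk) → ℂ)
            ((I, i'), (J, j')) =
          if i' = x.2.1 ∧ j' = x.2.2 ∧ Setoid.ker (Fin.append I J) = (x.1 : Setoid (Fin (l + k)))
          then 1 else 0 := by
  let b := (Pi.basisFun ℂ _).map (MHomFeat.pullbackEquiv n l k dl dk)
  refine ⟨?_, b, fun x I i' J j' => ?_⟩
  · rw [Module.finrank_eq_nat_card_basis b, Nat.card_prod, Nat.card_prod, Nat.card_fin,
      Nat.card_fin, Bell]
    ring
  · rw [Module.Basis.map_apply, Pi.basisFun_apply, MHomFeat.coe_pullbackEquiv_apply,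
      Function.comp_apply, Pi.single_apply]
    refine if_congr ?_ rfl rfl
    simp only [MHomFeat.orbitLabel, Prod.ext_iff, Subtype.ext_iff]
    tauto

/-- the space above has dimension `dk * dl * Bell (l + k) n`, with basis
the matrices `X_{π,i,j}` indexed by set partitions `π` of `Fin (l + k)` with at most
`n` blocks and feature indices `i ∈ Fin dl`, `j ∈ Fin dk`, where
`X_{π,i,j} ((I, i'), (J, j')) = 1` if `i' = i`, `j' = j` and the kernel partition of
the concatenated tuple `(I, J)` equals `π`, and `0` otherwise. -/
theorem MHomFeat_basis (l k n dl dk : ℕ) (hn : 1 ≤ n) (hdl : 1 ≤ dl) (hdk : 1 ≤ dk) :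
    Module.finrank ℂ ↥(MHomFeat n l k dl dk) = dk * dl * Bell (l + k) n ∧
    ∃ b : Module.Basis ({π : Setoid (Fin (l + k)) // Nat.card (Quotient π) ≤ n} × Fin dl × Fin dk)
        ℂ ↥(MHomFeat n l k dl dk),
      ∀ (x : {π : Setoid (Fin (l + k)) // Nat.card (Quotient π) ≤ n} × Fin dl × Fin dk)
        (I : Fin l → Fin n) (i' : Fin dl) (J : Fin k → Fin n) (j' : Fin dk),
        (b x : ((Fin l → Fin n) × Fin dl) × ((Fin k → Fin n) × Fin dk) → ℂ)
            ((I, i'), (J, j')) =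
          if i' = x.2.1 ∧ j' = x.2.2 ∧ Setoid.ker (Fin.append I J) = (x.1 : Setoid (Fin (l + k)))
          then 1 else 0 :=
  MHomFeat_basis_general l k n dl dk

end
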